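/- Let M be a compact topological space with a finite Borel measure μ of total mass V = μ(M) > 0, let φ₁, φ₂, … : M → ℂ be continuous functions each with ∫_M φₙ dμ = 0 and ∫_M |φₙ|² dμ = 1, and let a₁, a₂, … be positive reals such that Σₙ |φₙ(x)|² aₙ converges uniformly on M. If (p₁, …, p_N) ∈ M^N globally minimizes F_N(x₁, …, x_N) = Σ_{n=1}^∞ |φₙ(x₁) + ⋯ + φₙ(x_N)|² aₙ on M^N, then for every fixed index m one has (1/N) · |φ_m(p₁) + ⋯ + φ_m(p_N)| ≤ C(m)/√N, where C(m) = √( (1/(V·a_m)) · Σ_{n=1}^∞ aₙ ). -/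

import Mathlib

/-!
Greedy averaging. For `Tₙ = ∑ᵢ φₙ(qᵢ)`, the conditions `∫ φₙ = 0` and `∫ ‖φₙ‖² = 1` give
`⨍ ∑ₙ ‖Tₙ + φₙ(y)‖² aₙ dμ(y) = ∑ₙ ‖Tₙ‖² aₙ + (∑ₙ aₙ) / V`, so some point `y` does no worse than
this average. Adding points one at a time produces `q : Fin N → M` with `F_N(q) ≤ N (∑ₙ aₙ) / V`;
the minimiser `p` does at least as well, and keeping only the `m`-th term of `F_N(p)` gives
`‖∑ᵢ φₘ(pᵢ)‖² aₘ ≤ N (∑ₙ aₙ) / V`. Uniform convergence makes `∑ₙ ‖φₙ‖² aₙ` continuous, hence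
integrable on the compact space `M`, and integrating it term by term shows that `∑ₙ aₙ` is finite.
-/

open MeasureTheory

theorem norm_add_sq_mul_le {E : Type*} [SeminormedAddCommGroup E] (x y : E) {c : ℝ}
    (hc : 0 ≤ c) : ‖x + y‖ ^ 2 * c ≤ 2 * (‖x‖ ^ 2 * c) + 2 * (‖y‖ ^ 2 * c) := by
  have := mul_le_mul_of_nonneg_right
    ((pow_le_pow_left₀ (norm_nonneg _) (norm_add_le x y) 2).trans add_sq_le) hc
  linarith

theorem summable_norm_add_sq_mul {E : Type*} [SeminormedAddCommGroup E] {a : ℕ → ℝ}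
    (ha : ∀ n, 0 ≤ a n) {x y : ℕ → E}
    (hx : Summable fun n => ‖x n‖ ^ 2 * a n) (hy : Summable fun n => ‖y n‖ ^ 2 * a n) :
    Summable fun n => ‖x n + y n‖ ^ 2 * a n :=
  ((hx.mul_left 2).add (hy.mul_left 2)).of_nonneg_of_le
    (fun n => mul_nonneg (sq_nonneg _) (ha n)) fun n => norm_add_sq_mul_le _ _ (ha n)

theorem summable_norm_sum_sq_mul {α ι E : Type*} [SeminormedAddCommGroup E] {φ : ℕ → α → E}
    {a : ℕ → ℝ} (ha : ∀ n, 0 ≤ a n) (hsum : ∀ y, Summable fun n => ‖φ n y‖ ^ 2 * a n)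
    (s : Finset ι) (q : ι → α) :
    Summable fun n => ‖∑ i ∈ s, φ n (q i)‖ ^ 2 * a n := by
  classical
  induction s using Finset.induction_on with
  | empty => simp
  | insert i s hi ih =>
    simp_rw [Finset.sum_insert hi, add_comm (φ _ (q i))]
    exact summable_norm_add_sq_mul ha ih (hsum (q i))

section Integrals

variable {α E : Type*} [MeasurableSpace α] {μ : Measure α} [IsFiniteMeasure μ]
  [NormedAddCommGroup E]

theorem integrable_norm_add_sq_mul {φ : α → E} (hφ : MemLp φ 2 μ) (T : E) (c : ℝ) :
    Integrable (fun y => ‖T + φ y‖ ^ 2 * c) μ :=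
  (((memLp_const T).add hφ).integrable_norm_pow two_ne_zero).mul_const c

theorem integral_norm_add_sq_of_integral_eq_zero [InnerProductSpace ℝ E] [CompleteSpace E]
    {φ : α → E} (hφ : MemLp φ 2 μ) (hmean : ∫ y, φ y ∂μ = 0) (T : E) :
    ∫ y, ‖T + φ y‖ ^ 2 ∂μ = μ.real Set.univ * ‖T‖ ^ 2 + ∫ y, ‖φ y‖ ^ 2 ∂μ := by
  have hφ1 : Integrable φ μ := hφ.integrable one_le_two
  have hcross : Integrable (fun y => 2 * inner ℝ T (φ y)) μ := (hφ1.const_inner T).const_mul 2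
  have hcross_zero : ∫ y, 2 * inner ℝ T (φ y) ∂μ = 0 := by
    rw [integral_const_mul, integral_inner hφ1, hmean, inner_zero_right, mul_zero]
  have hlin : Integrable (fun y => ‖T‖ ^ 2 + 2 * inner ℝ T (φ y)) μ :=
    (integrable_const _).add hcross
  simp_rw [norm_add_sq_real]
  rw [integral_add hlin (hφ.integrable_norm_pow two_ne_zero),
    integral_add (integrable_const _) hcross, hcross_zero, integral_const, smul_eq_mul, add_zero]

variable {φ : ℕ → α → E} {a : ℕ → ℝ}

theorem hasSum_of_integrable_tsum_norm_sq_mul (hφ : ∀ n, MemLp (φ n) 2 μ)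
    (hnorm : ∀ n, ∫ y, ‖φ n y‖ ^ 2 ∂μ = 1) (ha : ∀ n, 0 ≤ a n)
    (hsum : ∀ y, Summable fun n => ‖φ n y‖ ^ 2 * a n)
    (hg : Integrable (fun y => ∑' n, ‖φ n y‖ ^ 2 * a n) μ) :
    HasSum a (∫ y, ∑' n, ‖φ n y‖ ^ 2 * a n ∂μ) := by
  have hF_int (n : ℕ) : Integrable (fun y => ‖φ n y‖ ^ 2 * a n) μ := by
    simpa using integrable_norm_add_sq_mul (hφ n) 0 (a n)
  have := hasSum_integral_of_dominated_convergence (fun n y => ‖φ n y‖ ^ 2 * a n)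
    (fun n => (hF_int n).aestronglyMeasurable)
    (fun n => ae_of_all _ fun y => (Real.norm_of_nonneg (mul_nonneg (sq_nonneg _) (ha n))).le)
    (ae_of_all _ hsum) hg (ae_of_all _ fun y => (hsum y).hasSum)
  simpa only [integral_mul_const, hnorm, one_mul] using this

theorem integrable_tsum_norm_add_sq_mul (hφ : ∀ n, MemLp (φ n) 2 μ) (ha : ∀ n, 0 ≤ a n)
    (hsum : ∀ y, Summable fun n => ‖φ n y‖ ^ 2 * a n)
    (hg : Integrable (fun y => ∑' n, ‖φ n y‖ ^ 2 * a n) μ)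
    {T : ℕ → E} (hT : Summable fun n => ‖T n‖ ^ 2 * a n) :
    Integrable (fun y => ∑' n, ‖T n + φ n y‖ ^ 2 * a n) μ := by
  have hf_meas : AEStronglyMeasurable (fun y => ∑' n, ‖T n + φ n y‖ ^ 2 * a n) μ :=
    aestronglyMeasurable_of_tendsto_ae Filter.atTop
      (fun s => (integrable_finsetSum (Finset.range s)
        fun n _ => integrable_norm_add_sq_mul (hφ n) (T n) (a n)).aestronglyMeasurable)
      (ae_of_all _ fun y => (summable_norm_add_sq_mul ha hT (hsum y)).hasSum.tendsto_sum_nat)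
  refine ((integrable_const (2 * ∑' n, ‖T n‖ ^ 2 * a n)).add (hg.const_mul 2)).mono' hf_meas
    (ae_of_all _ fun y => ?_)
  rw [Real.norm_of_nonneg (tsum_nonneg fun n => mul_nonneg (sq_nonneg _) (ha n))]
  exact hasSum_le (fun n => norm_add_sq_mul_le _ _ (ha n))
    (summable_norm_add_sq_mul ha hT (hsum y)).hasSum
    ((hT.hasSum.mul_left 2).add ((hsum y).hasSum.mul_left 2))

variable [InnerProductSpace ℝ E] [CompleteSpace E]

theorem integral_tsum_norm_add_sq_mul (hφ : ∀ n, MemLp (φ n) 2 μ)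
    (hmean : ∀ n, ∫ y, φ n y ∂μ = 0) (hnorm : ∀ n, ∫ y, ‖φ n y‖ ^ 2 ∂μ = 1)
    (ha : ∀ n, 0 ≤ a n) {A : ℝ} (hA : HasSum a A)
    {T : ℕ → E} (hT : Summable fun n => ‖T n‖ ^ 2 * a n) :
    ∫ y, ∑' n, ‖T n + φ n y‖ ^ 2 * a n ∂μ = μ.real Set.univ * ∑' n, ‖T n‖ ^ 2 * a n + A := by
  have hterm (n : ℕ) : ∫ y, ‖T n + φ n y‖ ^ 2 * a n ∂μ
      = μ.real Set.univ * (‖T n‖ ^ 2 * a n) + a n := by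
    rw [integral_mul_const, integral_norm_add_sq_of_integral_eq_zero (hφ n) (hmean n), hnorm]
    ring
  have hnorm_term (n : ℕ) : ∫ y, ‖‖T n + φ n y‖ ^ 2 * a n‖ ∂μ
      = μ.real Set.univ * (‖T n‖ ^ 2 * a n) + a n := by
    simp_rw [Real.norm_of_nonneg (mul_nonneg (sq_nonneg _) (ha n)), hterm]
  have hS := (hT.hasSum.mul_left (μ.real Set.univ)).add hA
  refine (hasSum_integral_of_summable_integral_norm
    (fun n => integrable_norm_add_sq_mul (hφ n) (T n) (a n)) ?_).unique ?_
  · simpa only [hnorm_term] using hS.summable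
  · simpa only [hterm] using hS

theorem exists_tsum_norm_add_sq_mul_le [NeZero μ] (hφ : ∀ n, MemLp (φ n) 2 μ)
    (hmean : ∀ n, ∫ y, φ n y ∂μ = 0) (hnorm : ∀ n, ∫ y, ‖φ n y‖ ^ 2 ∂μ = 1)
    (ha : ∀ n, 0 ≤ a n) (hsum : ∀ y, Summable fun n => ‖φ n y‖ ^ 2 * a n)
    (hg : Integrable (fun y => ∑' n, ‖φ n y‖ ^ 2 * a n) μ)
    {T : ℕ → E} (hT : Summable fun n => ‖T n‖ ^ 2 * a n) :
    ∃ y, ∑' n, ‖T n + φ n y‖ ^ 2 * a n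
      ≤ ∑' n, ‖T n‖ ^ 2 * a n + (∑' n, a n) / μ.real Set.univ := by
  have hA := hasSum_of_integrable_tsum_norm_sq_mul hφ hnorm ha hsum hg
  obtain ⟨y, hy⟩ :=
    exists_le_average (NeZero.ne μ) (integrable_tsum_norm_add_sq_mul hφ ha hsum hg hT)
  refine ⟨y, hy.trans_eq ?_⟩
  rw [average_eq, integral_tsum_norm_add_sq_mul hφ hmean hnorm ha hA hT, hA.tsum_eq, smul_eq_mul]
  field_simp [measureReal_univ_ne_zero]

theorem exists_tsum_norm_sum_sq_mul_le [NeZero μ] (hφ : ∀ n, MemLp (φ n) 2 μ)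
    (hmean : ∀ n, ∫ y, φ n y ∂μ = 0) (hnorm : ∀ n, ∫ y, ‖φ n y‖ ^ 2 ∂μ = 1)
    (ha : ∀ n, 0 ≤ a n) (hsum : ∀ y, Summable fun n => ‖φ n y‖ ^ 2 * a n)
    (hg : Integrable (fun y => ∑' n, ‖φ n y‖ ^ 2 * a n) μ) (k : ℕ) :
    ∃ q : Fin k → α, ∑' n, ‖∑ i, φ n (q i)‖ ^ 2 * a n
      ≤ k * (∑' n, a n) / μ.real Set.univ := by
  induction k with
  | zero => exact ⟨Fin.elim0, by simp⟩
  | succ k ih =>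
    obtain ⟨q, hq⟩ := ih
    obtain ⟨y, hy⟩ := exists_tsum_norm_add_sq_mul_le hφ hmean hnorm ha hsum hg
      (summable_norm_sum_sq_mul ha hsum Finset.univ q)
    refine ⟨Fin.snoc q y, ?_⟩
    simp only [Fin.sum_univ_castSucc, Fin.snoc_castSucc, Fin.snoc_last]
    calc _ ≤ _ := hy
      _ ≤ k * (∑' n, a n) / μ.real Set.univ + (∑' n, a n) / μ.real Set.univ := by gcongr
      _ = (k + 1 : ℕ) * (∑' n, a n) / μ.real Set.univ := by push_cast; ring

end Integrals

theorem one_div_mul_le_sqrt_div_sqrt {S N c : ℝ} (hN : 0 ≤ N) (h : S ^ 2 ≤ N * c) :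
    1 / N * S ≤ √c / √N :=
  calc 1 / N * S ≤ 1 / N * (√N * √c) := by
        gcongr
        rw [← Real.sqrt_mul hN]
        exact (le_abs_self S).trans (Real.abs_le_sqrt h)
    _ = √N / N * √c := by ring
    _ = √c / √N := by rw [Real.sqrt_div_self']; ring

theorem avg_bound_of_min_general {M : Type*} [TopologicalSpace M] [CompactSpace M]
    [MeasurableSpace M] [BorelSpace M] (μ : Measure M) [IsFiniteMeasure μ]
    (V : ℝ) (hV : V = (μ Set.univ).toReal) (hVpos : 0 < V)
    (φ : ℕ → M → ℂ) (hφ : ∀ n, Continuous (φ n))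
    (hmean : ∀ n, ∫ x, φ n x ∂μ = 0) (hnorm : ∀ n, ∫ x, ‖φ n x‖ ^ 2 ∂μ = 1)
    (a : ℕ → ℝ) (ha : ∀ n, 0 < a n)
    (hsummable : ∀ x : M, Summable fun n => ‖φ n x‖ ^ 2 * a n)
    (hunif : TendstoUniformly
      (fun s : ℕ => fun x : M => ∑ n ∈ Finset.range s, ‖φ n x‖ ^ 2 * a n)
      (fun x : M => ∑' n, ‖φ n x‖ ^ 2 * a n) Filter.atTop)
    (N : ℕ) (p : Fin N → M)
    (hmin : ∀ x : Fin N → M,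
      (∑' n, ‖∑ i, φ n (p i)‖ ^ 2 * a n) ≤ ∑' n, ‖∑ i, φ n (x i)‖ ^ 2 * a n)
    (m : ℕ) :
    (1 / (N : ℝ)) * ‖∑ i, φ m (p i)‖
      ≤ Real.sqrt ((1 / (V * a m)) * ∑' n, a n) / Real.sqrt N := by
  have : NeZero μ := ⟨by rintro rfl; simp [hV] at hVpos⟩
  have hL2 (n : ℕ) : MemLp (φ n) 2 μ :=
    (hφ n).memLp_of_hasCompactSupport (.of_compactSpace _)
  have hg : Integrable (fun x => ∑' n, ‖φ n x‖ ^ 2 * a n) μ :=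
    (hunif.continuous (Filter.Frequently.of_forall fun s => by fun_prop))
      |>.integrable_of_hasCompactSupport (.of_compactSpace _)
  have ha0 (n : ℕ) : 0 ≤ a n := (ha n).le
  obtain ⟨q, hq⟩ := exists_tsum_norm_sum_sq_mul_le hL2 hmean hnorm ha0 hsummable hg N
  have hterm : ‖∑ i, φ m (p i)‖ ^ 2 * a m ≤ N * (∑' n, a n) / V := by
    rw [hV]
    exact ((summable_norm_sum_sq_mul ha0 hsummable Finset.univ p).le_tsum m
      fun n _ => mul_nonneg (sq_nonneg _) (ha0 n)).trans ((hmin q).trans hq)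
  refine one_div_mul_le_sqrt_div_sqrt N.cast_nonneg ?_
  calc ‖∑ i, φ m (p i)‖ ^ 2 ≤ N * (∑' n, a n) / V / a m := (le_div_iff₀ (ha m)).2 hterm
    _ = N * (1 / (V * a m) * ∑' n, a n) := by ring

/-- In the setting of Statement 4, if `(p₁, …, p_N)` globally minimizes `F_N`,
then for every fixed index `m`,
`(1/N) · ‖φₘ(p₁) + ⋯ + φₘ(p_N)‖ ≤ C(m)/√N` where `C(m) = √((1/(V·aₘ)) · Σₙ aₙ)`. -/
theorem avg_bound_of_min {M : Type*} [TopologicalSpace M] [CompactSpace M]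
    [MeasurableSpace M] [BorelSpace M] (μ : Measure M) [IsFiniteMeasure μ]
    (V : ℝ) (hV : V = (μ Set.univ).toReal) (hVpos : 0 < V)
    (φ : ℕ → M → ℂ) (hφ : ∀ n, Continuous (φ n))
    (hmean : ∀ n, ∫ x, φ n x ∂μ = 0) (hnorm : ∀ n, ∫ x, ‖φ n x‖ ^ 2 ∂μ = 1)
    (a : ℕ → ℝ) (ha : ∀ n, 0 < a n)
    (hsummable : ∀ x : M, Summable fun n => ‖φ n x‖ ^ 2 * a n)
    (hunif : TendstoUniformly
      (fun s : ℕ => fun x : M => ∑ n ∈ Finset.range s, ‖φ n x‖ ^ 2 * a n)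
      (fun x : M => ∑' n, ‖φ n x‖ ^ 2 * a n) Filter.atTop)
    (N : ℕ) (hN : 1 ≤ N) (p : Fin N → M)
    (hmin : ∀ x : Fin N → M,
      (∑' n, ‖∑ i, φ n (p i)‖ ^ 2 * a n) ≤ ∑' n, ‖∑ i, φ n (x i)‖ ^ 2 * a n)
    (m : ℕ) :
    (1 / (N : ℝ)) * ‖∑ i, φ m (p i)‖
      ≤ Real.sqrt ((1 / (V * a m)) * ∑' n, a n) / Real.sqrt N :=
  avg_bound_of_min_general μ V hV hVpos φ hφ hmean hnorm a ha hsummable hunif N p hmin m
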